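/- Let s ≥ 1 be an integer and let p be an (s,0)-Hermite polynomial. Then for all x ∈ ℝ, p(x) = 1 − (∫₀ˣ y^{s−1}(1−y)^{s−1} dy) / (∫₀¹ y^{s−1}(1−y)^{s−1} dy). -/

import Mathlib

/-!
The vanishing conditions on `p'` at `0` and `1` make `X^(s-1) (X-1)^(s-1)` divide `p'`, and
since `deg p' ≤ 2s - 2` this forces `p' = c · y^(s-1) (1-y)^(s-1)`. Integrating from `0` and using
`p(0) = 1` gives `p(x) = 1 + c ∫₀ˣ y^(s-1) (1-y)^(s-1) dy`, and `p(1) = 0` determines `c`.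
-/

/-- A real polynomial `p` is an `(s,j)`-Hermite polynomial if `deg p ≤ 2s-1` and, for
every `0 ≤ k ≤ s-1`, `p⁽ᵏ⁾(0) = δ_{j,k}` and `p⁽ᵏ⁾(1) = 0`. -/
def IsHermitePoly (s j : ℕ) (p : Polynomial ℝ) : Prop :=
  p.natDegree ≤ 2 * s - 1 ∧
    ∀ k < s, (Polynomial.derivative^[k] p).eval 0 = (if j = k then (1 : ℝ) else 0) ∧
      (Polynomial.derivative^[k] p).eval 1 = 0

/-- A real polynomial `q` is an `(s,j)`-dual Hermite polynomial if `deg q ≤ 2s-1` and, for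
every `0 ≤ k ≤ s-1`, `q⁽ᵏ⁾(0) = 0` and `q⁽ᵏ⁾(1) = δ_{j,k}`. -/
def IsDualHermitePoly (s j : ℕ) (q : Polynomial ℝ) : Prop :=
  q.natDegree ≤ 2 * s - 1 ∧
    ∀ k < s, (Polynomial.derivative^[k] q).eval 0 = 0 ∧
      (Polynomial.derivative^[k] q).eval 1 = (if j = k then (1 : ℝ) else 0)


open Polynomial

namespace Polynomial

theorem X_sub_C_pow_dvd_of_iterate_derivative_eval_eq_zero {R : Type*} [CommRing R] [IsDomain R]
    [CharZero R] {p : R[X]} {a : R} {n : ℕ}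
    (h : ∀ m < n, (derivative^[m] p).eval a = 0) : (X - C a) ^ n ∣ p := by
  rcases eq_or_ne p 0 with rfl | hp
  · exact dvd_zero _
  rw [← le_rootMultiplicity_iff hp]
  cases n with
  | zero => exact Nat.zero_le _
  | succ k => exact lt_rootMultiplicity_of_isRoot_iterate_derivative hp fun m hm => h m (by omega)

theorem IsMonicOfDegree.exists_eq_C_mul_of_dvd {R : Type*} [CommSemiring R] {p q : R[X]} {n : ℕ}
    (hq : IsMonicOfDegree q n) (hdvd : q ∣ p) (hdeg : p.natDegree ≤ n) : ∃ c, p = C c * q := by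
  obtain ⟨r, rfl⟩ := hdvd
  rcases eq_or_ne r 0 with rfl | hr
  · exact ⟨0, by simp⟩
  have hr0 : r.natDegree = 0 := by
    rw [hq.monic.natDegree_mul' hr, hq.natDegree_eq] at hdeg
    omega
  exact ⟨r.coeff 0, by rw [mul_comm, ← eq_C_of_natDegree_eq_zero hr0]⟩

theorem eval_eq_eval_zero_add_integral_derivative (p : ℝ[X]) (x : ℝ) :
    p.eval x = p.eval 0 + ∫ y in (0 : ℝ)..x, (derivative p).eval y := by
  rw [intervalIntegral.integral_eq_sub_of_hasDerivAt (fun y _ => p.hasDerivAt y)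
    ((derivative p).continuous.intervalIntegrable _ _)]
  ring

end Polynomial

theorem integral_pow_mul_one_sub_pow_pos (m n : ℕ) :
    0 < ∫ y in (0 : ℝ)..1, y ^ m * (1 - y) ^ n :=
  intervalIntegral.intervalIntegral_pos_of_pos_on (by apply Continuous.intervalIntegrable; fun_prop)
    (fun _ hy => mul_pos (pow_pos hy.1 _) (pow_pos (sub_pos.2 hy.2) _)) one_pos

namespace IsHermitePoly

variable {s : ℕ} {p : ℝ[X]}

theorem X_pow_mul_X_sub_one_pow_dvd_derivative (hp : IsHermitePoly s 0 p) :
    X ^ (s - 1) * (X - C 1) ^ (s - 1) ∣ derivative p := by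
  have hcop : IsCoprime (X - C 0 : ℝ[X]) (X - C 1) := isCoprime_X_sub_C_of_isUnit_sub (by simp)
  have hdvd0 : (X - C 0) ^ (s - 1) ∣ derivative p :=
    X_sub_C_pow_dvd_of_iterate_derivative_eval_eq_zero fun m hm => by
      have h := (hp.2 (m + 1) (by omega)).1
      rwa [Function.iterate_succ_apply, if_neg (m.succ_ne_zero.symm)] at h
  have hdvd1 : (X - C 1) ^ (s - 1) ∣ derivative p :=
    X_sub_C_pow_dvd_of_iterate_derivative_eval_eq_zero fun m hm => by
      have h := (hp.2 (m + 1) (by omega)).2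
      rwa [Function.iterate_succ_apply] at h
  rw [C_0, sub_zero] at hcop hdvd0
  exact hcop.pow.mul_dvd hdvd0 hdvd1

theorem exists_derivative_eq_C_mul (hp : IsHermitePoly s 0 p) :
    ∃ c, derivative p = C c * (X ^ (s - 1) * (1 - X) ^ (s - 1)) := by
  have hq := (isMonicOfDegree_X_pow (R := ℝ) (s - 1)).mul
    ((isMonicOfDegree_X_sub_one 1).pow (s - 1))
  have hdeg : (derivative p).natDegree ≤ s - 1 + 1 * (s - 1) := by
    have := natDegree_derivative_le p
    have := hp.1
    omega
  obtain ⟨a, ha⟩ := hq.exists_eq_C_mul_of_dvd hp.X_pow_mul_X_sub_one_pow_dvd_derivative hdeg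
  refine ⟨a * (-1) ^ (s - 1), ?_⟩
  rw [ha, show (X - C 1 : ℝ[X]) = -1 * (1 - X) by rw [C_1]; ring, mul_pow, C_mul, C_pow, C_neg,
    C_1]
  ring

theorem exists_eval_eq_one_add_mul_integral (hp : IsHermitePoly s 0 p) (hs : 1 ≤ s) :
    ∃ c, ∀ x, p.eval x = 1 + c * ∫ y in (0 : ℝ)..x, y ^ (s - 1) * (1 - y) ^ (s - 1) := by
  obtain ⟨c, hc⟩ := hp.exists_derivative_eq_C_mul
  refine ⟨c, fun x => ?_⟩
  have hp0 : p.eval 0 = 1 := by simpa using (hp.2 0 hs).1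
  simp [eval_eq_eval_zero_add_integral_derivative p x, hc, hp0]

end IsHermitePoly

open MeasureTheory

/-- closed form of the `(s,0)`-Hermite polynomial via an incomplete
Beta-type integral. -/
theorem hermitePoly_zero_integral_formula (s : ℕ) (hs : 1 ≤ s)
    (p : Polynomial ℝ) (hp : IsHermitePoly s 0 p) :
    ∀ x : ℝ, p.eval x =
      1 - (∫ y in (0:ℝ)..x, y ^ (s - 1) * (1 - y) ^ (s - 1)) /
            (∫ y in (0:ℝ)..1, y ^ (s - 1) * (1 - y) ^ (s - 1)) := by
  obtain ⟨c, hc⟩ := hp.exists_eval_eq_one_add_mul_integral hs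
  have hc1 : 1 + c * ∫ y in (0 : ℝ)..1, y ^ (s - 1) * (1 - y) ^ (s - 1) = 0 := by
    simpa [hc 1] using (hp.2 0 hs).2
  have hpos := integral_pow_mul_one_sub_pow_pos (s - 1) (s - 1)
  intro x
  rw [hc x]
  field_simp
  linear_combination (∫ y in (0 : ℝ)..x, y ^ (s - 1) * (1 - y) ^ (s - 1)) * hc1
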